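/- For every n ≥ 2, any linear subspace M of ℓ∞ with M \ {0} ⊆ { x : 2 ≤ |L_x| ≤ n } has dimension at most n−1; moreover, if M has dimension ≥ n, then M contains a vector z with |L_z| ≥ n+1 or a nonzero vector with |L_z| ≤ 1. -/

import Mathlib

open Filter Topology Set ENNReal

noncomputable section

/-- The set of accumulation points of a real sequence: limits of convergent subsequences. -/
def accPts (x : ℕ → ℝ) : Set ℝ :=
  {a | ∃ φ : ℕ → ℕ, StrictMono φ ∧ Tendsto (fun k => x (φ k)) atTop (𝓝 a)}


/-- The space ℓ∞ of bounded real sequences. -/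
abbrev Linf : Type := ↥(lp (fun _ : ℕ => ℝ) ∞)

/-- Accumulation points of an element of ℓ∞. -/
def accPtsL (z : Linf) : Set ℝ := accPts (fun n => z n)

/-!
Take linearly independent `v₁, …, vₙ` in `M` and let `S ⊆ ℝⁿ` be the set of subsequential
limits of the bounded sequence `k ↦ (v₁ k, …, vₙ k)`. By Bolzano–Weierstrass the accumulation
points of `∑ cᵢ vᵢ` are exactly the values `c ⬝ᵥ s`, `s ∈ S`. If every nonzero combination has at
least two accumulation points, no nonzero functional is constant on `S`; so `S` lies in no affine
hyperplane and has at least `n + 1` points. Since the dual of `ℝⁿ` is not a finite union of proper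
subspaces, some functional separates `n + 1` of these points, and the corresponding combination
has at least `n + 1` accumulation points.
-/

open Module

section Dual

variable {k V : Type*} [Field k] [AddCommGroup V] [Module k V]

theorem exists_dual_injOn [Infinite k] {t : Set V} (ht : t.Finite) :
    ∃ f : Dual k V, InjOn f t := by
  by_contra! h
  have : Finite t := ht
  have hcover : ⋃ p : {p : t × t // p.1 ≠ p.2},
      (LinearMap.ker (Dual.eval k V ((p.1.1 : V) - p.1.2)) : Set (Dual k V)) = univ := by
    refine eq_univ_of_forall fun f => ?_
    obtain ⟨a, ha, b, hb, hfab, hab⟩ : ∃ a ∈ t, ∃ b ∈ t, f a = f b ∧ a ≠ b := by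
      simpa [InjOn] using h f
    exact mem_iUnion.2 ⟨⟨(⟨a, ha⟩, ⟨b, hb⟩), by simpa using hab⟩, by simp [hfab]⟩
  obtain ⟨⟨⟨a, b⟩, hab⟩, htop⟩ := Subspace.exists_eq_top_of_iUnion_eq_univ hcover
  refine hab (Subtype.ext (sub_eq_zero.mp ((forall_dual_apply_eq_zero_iff k _).mp fun f => ?_)))
  simpa using (htop ▸ Submodule.mem_top : f ∈ LinearMap.ker (Dual.eval k V ((a : V) - b)))

theorem vectorSpan_ne_top_of_ncard_le [FiniteDimensional k V] [Nontrivial V] {s : Set V}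
    (hs : s.Finite) (hcard : s.ncard ≤ finrank k V) : vectorSpan k s ≠ ⊤ := by
  rcases s.eq_empty_or_nonempty with rfl | hne
  · simp
  · have : Fintype s := hs.fintype
    have : Nonempty s := hne.to_subtype
    intro htop
    have := finrank_vectorSpan_range_add_one_le k ((↑) : s → V)
    rw [Subtype.range_coe, htop, finrank_top, ← Nat.card_eq_fintype_card,
      Nat.card_coe_set_eq] at this
    omega

theorem exists_dual_ne_zero_eqOn_of_vectorSpan_ne_top {s : Set V} (hs : vectorSpan k s ≠ ⊤) :
    ∃ f : Dual k V, f ≠ 0 ∧ ∀ a ∈ s, ∀ b ∈ s, f a = f b := by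
  obtain ⟨f, hf0, hf⟩ := Submodule.exists_dual_map_eq_bot_of_lt_top hs.lt_top inferInstance
  refine ⟨f, hf0, fun a ha b hb => sub_eq_zero.mp ?_⟩
  rw [← map_sub, ← Submodule.mem_bot k, ← hf]
  exact Submodule.mem_map_of_mem (vsub_mem_vectorSpan k ha hb)

theorem exists_dual_ne_zero_finrank_add_one_le_encard_image [Infinite k] [FiniteDimensional k V]
    [Nontrivial V] {S : Set V} (hS : ∀ f : Dual k V, f ≠ 0 → (f '' S).Nontrivial) :
    ∃ f : Dual k V, f ≠ 0 ∧ finrank k V + 1 ≤ (f '' S).encard := by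
  have hS_card : finrank k V + 1 ≤ S.encard := by
    by_contra! hlt
    have hfin : S.Finite := finite_of_encard_le_coe (Order.le_of_lt_add_one hlt)
    have hcard : S.ncard ≤ finrank k V := by
      rw [← hfin.cast_ncard_eq] at hlt
      exact_mod_cast Order.le_of_lt_add_one hlt
    obtain ⟨f, hf0, hconst⟩ :=
      exists_dual_ne_zero_eqOn_of_vectorSpan_ne_top (vectorSpan_ne_top_of_ncard_le hfin hcard)
    obtain ⟨_, ⟨a, ha, rfl⟩, _, ⟨b, hb, rfl⟩, hab⟩ := hS f hf0
    exact hab (hconst a ha b hb)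
  obtain ⟨t, htS, ht⟩ := exists_subset_encard_eq hS_card
  have htfin : t.Finite := finite_of_encard_eq_coe ht
  obtain ⟨f, hf⟩ := exists_dual_injOn (k := k) htfin
  refine ⟨f, ?_, ?_⟩
  · rintro rfl
    have htwo : 1 < t.encard := by
      have := finrank_pos (R := k) (M := V)
      rw [ht]
      exact_mod_cast (by omega : 1 < finrank k V + 1)
    obtain ⟨a, ha, b, hb, hab⟩ := one_lt_encard_iff_nontrivial.mp htwo
    exact hab (hf ha hb rfl)
  · calc (finrank k V + 1 : ℕ∞) = (f '' t).encard := by rw [hf.encard_image, ht]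
      _ ≤ (f '' S).encard := encard_le_encard (image_mono htS)

end Dual

def subseqLimits {E : Type*} [TopologicalSpace E] (u : ℕ → E) : Set E :=
  {a | ∃ φ : ℕ → ℕ, StrictMono φ ∧ Tendsto (u ∘ φ) atTop (𝓝 a)}

theorem subseqLimits_comp {E F : Type*} [PseudoMetricSpace E] [ProperSpace E]
    [TopologicalSpace F] [T2Space F] {f : E → F} (hf : Continuous f) {u : ℕ → E}
    (hu : Bornology.IsBounded (range u)) : subseqLimits (f ∘ u) = f '' subseqLimits u := by
  ext b
  constructor
  · rintro ⟨φ, hφ, hb⟩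
    obtain ⟨a, -, ψ, hψ, ha⟩ := tendsto_subseq_of_bounded hu fun k => mem_range_self (φ k)
    exact ⟨a, ⟨φ ∘ ψ, hφ.comp hψ, ha⟩,
      tendsto_nhds_unique ((hf.tendsto a).comp ha) (hb.comp hψ.tendsto_atTop)⟩
  · rintro ⟨a, ⟨φ, hφ, ha⟩, rfl⟩
    exact ⟨φ, hφ, (hf.tendsto a).comp ha⟩

section Linf

variable {ι : Type*} [Fintype ι]

def jointSeq (v : ι → Linf) (k : ℕ) : ι → ℝ := fun i => v i k

theorem isBounded_range_jointSeq (v : ι → Linf) : Bornology.IsBounded (range (jointSeq v)) := by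
  refine isBounded_iff_forall_norm_le.2 ⟨∑ i, ‖v i‖, ?_⟩
  rintro _ ⟨k, rfl⟩
  refine (pi_norm_le_iff_of_nonneg (by positivity)).2 fun i => ?_
  exact (lp.norm_apply_le_norm ENNReal.top_ne_zero (v i) k).trans
    (Finset.single_le_sum (fun j _ => norm_nonneg (v j)) (Finset.mem_univ i))

theorem sum_smul_apply_eq_dotProduct (v : ι → Linf) (c : ι → ℝ) (k : ℕ) :
    (∑ i, c i • v i : Linf) k = c ⬝ᵥ jointSeq v k := by
  rw [lp.coeFn_sum, Finset.sum_apply]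
  simp [dotProduct, jointSeq]

theorem accPtsL_sum_smul (v : ι → Linf) (c : ι → ℝ) :
    accPtsL (∑ i, c i • v i) = dotProduct c '' subseqLimits (jointSeq v) := by
  rw [← subseqLimits_comp (by fun_prop) (isBounded_range_jointSeq v)]
  change subseqLimits (fun k => (∑ i, c i • v i : Linf) k) = _
  congr 1
  funext k
  exact sum_smul_apply_eq_dotProduct v c k

end Linf

theorem not_finite_or_le_ncard_of_le_encard {α : Type*} {s : Set α} {m : ℕ}
    (h : (m : ℕ∞) ≤ s.encard) : ¬ s.Finite ∨ m ≤ s.ncard :=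
  or_iff_not_imp_left.mpr fun hfin => by
    rw [← (not_not.mp hfin).cast_ncard_eq] at h
    exact_mod_cast h

theorem exists_mem_ne_zero_encard_accPtsL_ge (M : Submodule ℝ Linf) {n : ℕ} (hn : n ≠ 0)
    (hr : n ≤ Module.rank ℝ M) (hM : ∀ z ∈ M, z ≠ 0 → (accPtsL z).Nontrivial) :
    ∃ z ∈ M, z ≠ 0 ∧ n + 1 ≤ (accPtsL z).encard := by
  obtain ⟨w, hw⟩ := exists_linearIndependent_of_le_rank hr
  set v : Fin n → Linf := M.subtype ∘ w
  have hv : LinearIndependent ℝ v := hw.map' M.subtype M.ker_subtype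
  have hvM (c : Fin n → ℝ) : ∑ i, c i • v i ∈ M :=
    M.sum_mem fun i _ => M.smul_mem _ (w i).2
  have hv0 {c : Fin n → ℝ} (hc : c ≠ 0) : ∑ i, c i • v i ≠ 0 := fun h0 =>
    hc (funext (Fintype.linearIndependent_iff.mp hv c h0))
  have : NeZero n := ⟨hn⟩
  let e := (dotProductEquiv ℝ (Fin n)).symm
  have he (f : Dual ℝ (Fin n → ℝ)) : ⇑f = dotProduct (e f) :=
    congrArg DFunLike.coe ((dotProductEquiv ℝ (Fin n)).apply_symm_apply f).symm
  obtain ⟨f, hf0, hcard⟩ := exists_dual_ne_zero_finrank_add_one_le_encard_image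
    (S := subseqLimits (jointSeq v)) fun f hf0 => by
      rw [he, ← accPtsL_sum_smul]
      exact hM _ (hvM _) (hv0 (e.map_ne_zero_iff.mpr hf0))
  refine ⟨_, hvM (e f), hv0 (e.map_ne_zero_iff.mpr hf0), ?_⟩
  rwa [Module.finrank_fin_fun, he, ← accPtsL_sum_smul] at hcard

theorem exact_lineability_interval (n : ℕ) (hn : 2 ≤ n) :
    (∀ M : Submodule ℝ Linf,
      (∀ z ∈ M, z ≠ 0 → (accPtsL z).Finite ∧ 2 ≤ (accPtsL z).ncard ∧ (accPtsL z).ncard ≤ n) →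
      Module.rank ℝ M ≤ (n - 1 : ℕ)) ∧
    (∀ M : Submodule ℝ Linf, (n : Cardinal) ≤ Module.rank ℝ M →
      ∃ z ∈ M, (¬ (accPtsL z).Finite ∨ n + 1 ≤ (accPtsL z).ncard) ∨
        (z ≠ 0 ∧ (accPtsL z).Finite ∧ (accPtsL z).ncard ≤ 1)) := by
  constructor
  · intro M hM
    by_contra! hlt
    have hr : (n : Cardinal) ≤ Module.rank ℝ M := by
      have := Order.succ_le_of_lt hlt
      rwa [Cardinal.succ_natCast, ← Nat.cast_add_one, Nat.sub_add_cancel (by omega)] at this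
    obtain ⟨z, hzM, hz0, hz⟩ := exists_mem_ne_zero_encard_accPtsL_ge M (by omega) hr
      fun z hzM hz0 => (one_lt_ncard_iff_nontrivial_and_finite.mp (hM z hzM hz0).2.1).1
    obtain ⟨hfin, -, hle⟩ := hM z hzM hz0
    rcases not_finite_or_le_ncard_of_le_encard (m := n + 1) (by exact_mod_cast hz) with h | h
    · exact h hfin
    · omega
  · intro M hr
    by_cases h : ∀ z ∈ M, z ≠ 0 → (accPtsL z).Nontrivial
    · obtain ⟨z, hzM, -, hz⟩ := exists_mem_ne_zero_encard_accPtsL_ge M (by omega) hr h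
      exact ⟨z, hzM, Or.inl (not_finite_or_le_ncard_of_le_encard (by exact_mod_cast hz))⟩
    · push Not at h
      obtain ⟨z, hzM, hz0, hsub⟩ := h
      have := hsub.finite.to_subtype
      exact ⟨z, hzM, Or.inr ⟨hz0, hsub.finite, ncard_le_one_iff_subsingleton.mpr hsub⟩⟩
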